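/- The algebra NCSym is freely generated by the elements {p_A : A atomic}; that is, the p_A for atomic A are algebraically independent and generate NCSym. -/

import Mathlib

open scoped Classical
noncomputable section

/-- The ground set `[n] = {1, …, n}`. -/
def ground (n : ℕ) : Finset ℕ := Finset.Icc 1 n

/-- `A` is a set partition of `[n]`. -/
def IsSetPartition (n : ℕ) (A : Finset (Finset ℕ)) : Prop :=
  (∀ B ∈ A, B.Nonempty) ∧
  (∀ B ∈ A, ∀ C ∈ A, B ≠ C → Disjoint B C) ∧
  A.sup id = ground n

/-- Shift every entry of every part by `n`. -/
def shiftP (n : ℕ) (A : Finset (Finset ℕ)) : Finset (Finset ℕ) :=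
  A.image (fun B => B.image (· + n))

/-- Shifted concatenation `A|B` of a set partition `A ⊢ [n]` with `B`. -/
def concatP (n : ℕ) (A B : Finset (Finset ℕ)) : Finset (Finset ℕ) :=
  A ∪ shiftP n B

/-- `A` is an atomic set partition of `[n]`: nonempty and not a nontrivial
shifted concatenation. -/
def AtomicP (n : ℕ) (A : Finset (Finset ℕ)) : Prop :=
  IsSetPartition n A ∧ 0 < n ∧
  ¬ ∃ k B C, 0 < k ∧ k < n ∧ IsSetPartition k B ∧ IsSetPartition (n - k) C ∧
      A = concatP k B C

/-- Shifted concatenation of a list of (size, set partition) pairs. -/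
def concatListP : List (ℕ × Finset (Finset ℕ)) → ℕ × Finset (Finset ℕ)
  | [] => (0, ∅)
  | p :: L => ((concatListP L).1 + p.1, concatP p.1 p.2 (concatListP L).2)

/-- `L` is the atomic factorization `A^!` of the set partition `A ⊢ [n]`. -/
def AtomicFactorization (n : ℕ) (A : Finset (Finset ℕ))
    (L : List (ℕ × Finset (Finset ℕ))) : Prop :=
  (∀ p ∈ L, AtomicP p.1 p.2) ∧ concatListP L = (n, A)

/-- The Bell number: the number of set partitions of `[n]`. -/
def bell (n : ℕ) : ℕ := Nat.card {A : Finset (Finset ℕ) // IsSetPartition n A}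

/-- Stirling numbers of the second kind: set partitions of `[n]` into `k` parts. -/
def stirling2 (n k : ℕ) : ℕ :=
  Nat.card {A : Finset (Finset ℕ) // IsSetPartition n A ∧ A.card = k}

/-- The number of atomic set partitions of `[n]` into `k` parts. -/
def atomCount (n k : ℕ) : ℕ :=
  Nat.card {A : Finset (Finset ℕ) // AtomicP n A ∧ A.card = k}

/-- The number of atomic set partitions of `[n]`. -/
def atomCount' (n : ℕ) : ℕ := Nat.card {A : Finset (Finset ℕ) // AtomicP n A}

/-- Refinement order: `A ≤ B` iff every part of `A` is contained in a part of `B`. -/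
def refines (A B : Finset (Finset ℕ)) : Prop := ∀ a ∈ A, ∃ b ∈ B, a ⊆ b

/-- The meet `A ∧ B` of two set partitions. -/
def meetP (A B : Finset (Finset ℕ)) : Finset (Finset ℕ) :=
  ((A ×ˢ B).image fun p => p.1 ∩ p.2).filter (·.Nonempty)

/-- The set partition `{[n]}` with a single part (empty if `n = 0`). -/
def onePartP (n : ℕ) : Finset (Finset ℕ) := if n = 0 then ∅ else {ground n}

/-- The finite set of set partitions of `[n]` satisfying a predicate `P`. -/
def SPs (n : ℕ) (P : Finset (Finset ℕ) → Prop) : Finset (Finset (Finset ℕ)) :=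
  (ground n).powerset.powerset.filter fun A => IsSetPartition n A ∧ P A

/-- Covering relation for `≤_*`: `B` covers `A` if `B` is obtained from `A` by merging two
parts `a, a'` with every element of `a` smaller than every element of `a'`. -/
def coverStar (A B : Finset (Finset ℕ)) : Prop :=
  ∃ a ∈ A, ∃ a' ∈ A, a ≠ a' ∧ (∀ x ∈ a, ∀ y ∈ a', x < y) ∧
    B = insert (a ∪ a') ((A.erase a).erase a')

/-- The order `≤_*` on set partitions. -/
def leStar : Finset (Finset ℕ) → Finset (Finset ℕ) → Prop :=
  Relation.ReflTransGen coverStar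

/-- Restriction `A↓_S` of a set partition to the entries in `S`. -/
def restrictP (A : Finset (Finset ℕ)) (S : Finset ℕ) : Finset (Finset ℕ) :=
  (A.image (· ∩ S)).filter (·.Nonempty)

/-- The standardization map of a finite set `S`: sends the `i`-th smallest element of `S`
to `i` (1-indexed). -/
def stMap (S : Finset ℕ) (x : ℕ) : ℕ := (S.filter (· ≤ x)).card

/-- Standardization of a set partition: relabel its entries to `{1,…,m}` preserving order. -/
def stdP (A : Finset (Finset ℕ)) : Finset (Finset ℕ) :=
  A.image fun b => b.image (stMap (A.sup id))

/-- The map raising `{1,…,|S|}` order-preservingly onto `S`. -/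
def raiseMap (S : Finset ℕ) (x : ℕ) : ℕ := (S.sort (· ≤ ·)).getD (x - 1) 0

/-- `A↑_S`: raise the entries of `A` order-preservingly so the ground set becomes `S`. -/
def raiseP (S : Finset ℕ) (A : Finset (Finset ℕ)) : Finset (Finset ℕ) :=
  A.image fun b => b.image (raiseMap S)

/-- `IsShuffle l₁ l₂ l`: `l` is a shuffle (interleaving) of `l₁` and `l₂`. -/
inductive IsShuffle {α : Type*} : List α → List α → List α → Prop
  | nil : IsShuffle [] [] []
  | left {a : α} {l₁ l₂ l : List α} : IsShuffle l₁ l₂ l → IsShuffle (a :: l₁) l₂ (a :: l)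
  | right {a : α} {l₁ l₂ l : List α} : IsShuffle l₁ l₂ l → IsShuffle l₁ (a :: l₂) (a :: l)

/-- A word is Lyndon if it is nonempty and lexicographically strictly smaller than all of
its proper cyclic rotations. -/
def LyndonWord {α : Type*} (lt : α → α → Prop) (w : List α) : Prop :=
  w ≠ [] ∧ ∀ i, 0 < i → i < w.length → List.Lex lt w (w.rotate i)

/-- A set partition is Lyndon (with respect to a total order `lt` on atomic set partitions)
if its atomic factorization is a Lyndon word. -/
def LyndonPartition (lt : ℕ × Finset (Finset ℕ) → ℕ × Finset (Finset ℕ) → Prop)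
    (n : ℕ) (A : Finset (Finset ℕ)) : Prop :=
  ∃ L, AtomicFactorization n A L ∧ LyndonWord lt L

/-! ### Set compositions -/

/-- `Φ` is a set composition of `[n]`: an ordered sequence of nonempty pairwise disjoint
sets whose union is `[n]`. -/
def IsSetComposition (n : ℕ) (Φ : List (Finset ℕ)) : Prop :=
  (∀ B ∈ Φ, B.Nonempty) ∧ Φ.Pairwise Disjoint ∧ Φ.foldr (· ∪ ·) ∅ = ground n

/-- Shift every entry of every part of a set composition by `n`. -/
def shiftC (n : ℕ) (Φ : List (Finset ℕ)) : List (Finset ℕ) :=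
  Φ.map (·.image (· + n))

/-- Shifted concatenation `Φ|Ψ` of set compositions, `Φ ⊨ [n]`. -/
def concatC (n : ℕ) (Φ Ψ : List (Finset ℕ)) : List (Finset ℕ) := Φ ++ shiftC n Ψ

/-- An atomic set composition: nonempty and not a nontrivial shifted concatenation. -/
def AtomicC (n : ℕ) (Φ : List (Finset ℕ)) : Prop :=
  IsSetComposition n Φ ∧ 0 < n ∧
  ¬ ∃ k Ψ Γ, 0 < k ∧ k < n ∧ IsSetComposition k Ψ ∧ IsSetComposition (n - k) Γ ∧
      Φ = concatC k Ψ Γ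

/-- Shifted concatenation of a list of (size, set composition) pairs. -/
def concatListC : List (ℕ × List (Finset ℕ)) → ℕ × List (Finset ℕ)
  | [] => (0, [])
  | p :: L => ((concatListC L).1 + p.1, concatC p.1 p.2 (concatListC L).2)

/-- `L` is the atomic factorization `Φ^!` of the set composition `Φ ⊨ [n]`. -/
def AtomicFactorizationC (n : ℕ) (Φ : List (Finset ℕ))
    (L : List (ℕ × List (Finset ℕ))) : Prop :=
  (∀ p ∈ L, AtomicC p.1 p.2) ∧ concatListC L = (n, Φ)

/-- Covering relation for `≤_*` on set compositions: merge two adjacent parts `a, b` with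
every element of `a` smaller than every element of `b`. -/
def coverStarC (Φ Ψ : List (Finset ℕ)) : Prop :=
  ∃ L₁ a b L₂, Φ = L₁ ++ a :: b :: L₂ ∧ (∀ x ∈ a, ∀ y ∈ b, x < y) ∧
    Ψ = L₁ ++ (a ∪ b) :: L₂

/-- The order `≤_*` on set compositions. -/
def leStarC : List (Finset ℕ) → List (Finset ℕ) → Prop :=
  Relation.ReflTransGen coverStarC

/-- The meet operation `Φ ∧ Ψ` on set compositions: the nonempty intersections
`Φ_i ∩ Ψ_j` in lexicographic order of `(i, j)`. -/
def meetC (Φ Ψ : List (Finset ℕ)) : List (Finset ℕ) :=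
  (Φ.flatMap fun a => Ψ.map fun b => a ∩ b).filter (·.Nonempty)

/-- The one-part set composition `([n])` (empty if `n = 0`). -/
def onePartC (n : ℕ) : List (Finset ℕ) := if n = 0 then [] else [ground n]

/-- Lists of length `k` with all entries in `s`. -/
def listsOfLen (s : Finset (Finset ℕ)) : ℕ → Finset (List (Finset ℕ))
  | 0 => {[]}
  | k + 1 => (s ×ˢ listsOfLen s k).image fun p => p.1 :: p.2

/-- The finite set of set compositions of `[n]` satisfying a predicate `P`. -/
def SCs (n : ℕ) (P : List (Finset ℕ) → Prop) : Finset (List (Finset ℕ)) :=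
  ((Finset.range (n + 1)).biUnion fun k => listsOfLen (ground n).powerset k).filter
    fun Φ => IsSetComposition n Φ ∧ P Φ

/-- `Φ↑_S`: raise the entries of a set composition order-preservingly into `S`. -/
def raiseC (S : Finset ℕ) (Φ : List (Finset ℕ)) : List (Finset ℕ) :=
  Φ.map (·.image (raiseMap S))

/-- Standardization of a set composition. -/
def stdC (Φ : List (Finset ℕ)) : List (Finset ℕ) :=
  Φ.map (·.image (stMap (Φ.foldr (· ∪ ·) ∅)))

/-- `α(Φ)`: the composition of part sizes of `Φ`. -/
def alphaC (Φ : List (Finset ℕ)) : List ℕ := Φ.map Finset.card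

/-- The order `≤_#` on set compositions: `Φ ≤_# Ψ` iff `α(Φ) = α(Ψ)` and each atomic factor
of `Φ` is the standardization of the corresponding consecutive block of parts of `Ψ`. -/
def leSharp (Φ Ψ : List (Finset ℕ)) : Prop :=
  alphaC Φ = alphaC Ψ ∧
  ∃ (L : List (ℕ × List (Finset ℕ))) (Bs : List (List (Finset ℕ))),
    (∀ p ∈ L, AtomicC p.1 p.2) ∧ (concatListC L).2 = Φ ∧
    Ψ = Bs.flatten ∧ List.Forall₂ (fun b (l : ℕ × List (Finset ℕ)) => stdC b = l.2) Bs L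

/-! ### Index types -/

/-- Set partitions with their sizes. -/
abbrev SPIdx := {x : ℕ × Finset (Finset ℕ) // IsSetPartition x.1 x.2}

/-- Atomic set partitions with their sizes. -/
abbrev AtomIdx := {x : ℕ × Finset (Finset ℕ) // AtomicP x.1 x.2}

/-- Set compositions with their sizes. -/
abbrev SCIdx := {x : ℕ × List (Finset ℕ) // IsSetComposition x.1 x.2}

/-- Atomic set compositions with their sizes. -/
abbrev AtomCIdx := {x : ℕ × List (Finset ℕ) // AtomicC x.1 x.2}


/-!
Set partitions form a monoid under shifted concatenation `A|B`, and unique atomic factorization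
says that this monoid is free on the atomic set partitions. Since `p_A p_B = p_{A|B}`, the power
sums are a monoid hom from it into `NCSym`, so the algebra map out of the free algebra sends the
free monoid basis bijectively onto `{p_A}`. The `p_A` form a basis because `p_A = ∑_{B ≥ A} m_B`
is unitriangular with respect to the `m`-basis for the refinement order.
-/

open Finset

section UnitriangularBasis

variable {ι κ K M N : Type*} [Ring K] [AddCommGroup M] [Module K M] [AddCommGroup N] [Module K N]

/-- `j ∈ up i` is a partial order on `ι` whose principal up-sets are the finite sets `up i`. -/
structure IsUpSetFamily (up : ι → Finset ι) : Prop where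
  mem_self : ∀ i, i ∈ up i
  subset_of_mem : ∀ ⦃i j⦄, j ∈ up i → up j ⊆ up i
  eq_of_mem_of_mem : ∀ ⦃i j⦄, j ∈ up i → i ∈ up j → i = j

namespace IsUpSetFamily

variable {up : ι → Finset ι}

lemma card_lt (h : IsUpSetFamily up) {i j : ι} (hj : j ∈ up i) (hne : j ≠ i) :
    #(up j) < #(up i) :=
  card_lt_card <| (ssubset_iff_of_subset (h.subset_of_mem hj)).mpr
    ⟨i, h.mem_self i, fun hi => hne (h.eq_of_mem_of_mem hj hi).symm⟩

lemma linearIndependent_sum (h : IsUpSetFamily up) {b : ι → M} (hb : LinearIndependent K b) :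
    LinearIndependent K fun i => ∑ j ∈ up i, b j := by
  rw [linearIndependent_iff']
  intro s g hg
  by_contra! hne
  obtain ⟨i₀, hi₀, hmax⟩ := (s.filter (g · ≠ 0)).exists_max_image (fun i => #(up i))
    (by obtain ⟨i, hi, hgi⟩ := hne; exact ⟨i, mem_filter.mpr ⟨hi, hgi⟩⟩)
  rw [mem_filter] at hi₀
  have hexpand : ∑ j ∈ s.biUnion up, (∑ i ∈ s with j ∈ up i, g i) • b j = 0 := by
    rw [← hg]
    simp only [smul_sum, sum_smul]
    exact (sum_comm' fun i j => by simp only [mem_filter, mem_biUnion]; grind).symm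
  have hcoeff := linearIndependent_iff'.mp hb _ _ hexpand i₀
    (mem_biUnion.mpr ⟨i₀, hi₀.1, h.mem_self i₀⟩)
  -- any other `i` with `i₀ ∈ up i` has a larger up-set, so `g i = 0` by maximality of `i₀`
  rw [sum_eq_single_of_mem (s := {i ∈ s | i₀ ∈ up i}) i₀
    (mem_filter.mpr ⟨hi₀.1, h.mem_self i₀⟩)] at hcoeff
  · exact hi₀.2 hcoeff
  · intro i hi hne
    rw [mem_filter] at hi
    by_contra hgi
    exact (hmax i (mem_filter.mpr ⟨hi.1, hgi⟩)).not_gt (h.card_lt hi.2 (Ne.symm hne))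

lemma span_sum (h : IsUpSetFamily up) {b : ι → M} (hb : Submodule.span K (Set.range b) = ⊤) :
    Submodule.span K (Set.range fun i => ∑ j ∈ up i, b j) = ⊤ := by
  rw [eq_top_iff, ← hb, Submodule.span_le, Set.range_subset_iff]
  intro i
  induction hc : #(up i) using Nat.strong_induction_on generalizing i with
  | _ c ih =>
  have hbi : b i = ∑ j ∈ up i, b j - ∑ j ∈ (up i).erase i, b j := by
    rw [← add_sum_erase _ _ (h.mem_self i), add_sub_cancel_right]
  rw [SetLike.mem_coe, hbi]
  refine sub_mem (Submodule.subset_span ⟨i, rfl⟩) (Submodule.sum_mem _ fun j hj => ?_)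
  obtain ⟨hne, hj⟩ := mem_erase.mp hj
  exact ih _ (hc ▸ h.card_lt hj hne) j rfl

end IsUpSetFamily

def Module.Basis.sumUp (b : Module.Basis ι K M) {up : ι → Finset ι}
    (h : IsUpSetFamily up) : Module.Basis ι K M :=
  .mk (h.linearIndependent_sum b.linearIndependent) (h.span_sum b.span_eq).ge

lemma Module.Basis.sumUp_apply (b : Module.Basis ι K M) {up : ι → Finset ι}
    (h : IsUpSetFamily up) (i : ι) : b.sumUp h i = ∑ j ∈ up i, b j :=
  Module.Basis.mk_apply _ _ _

lemma Module.Basis.bijective_of_apply_eq {f : M →ₗ[K] N} (b : Module.Basis ι K M)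
    (c : Module.Basis κ K N) (e : ι ≃ κ) (h : ∀ i, f (b i) = c (e i)) : Function.Bijective f := by
  have hf : f = b.equiv c e := b.ext fun i => by rw [h, LinearEquiv.coe_coe, b.equiv_apply]
  exact hf ▸ (b.equiv c e).bijective

end UnitriangularBasis

lemma FreeAlgebra.basisFreeMonoid_apply (R X : Type*) [CommSemiring R] (w : FreeMonoid X) :
    FreeAlgebra.basisFreeMonoid R X w = FreeMonoid.lift (FreeAlgebra.ι R) w := by
  simp [FreeAlgebra.basisFreeMonoid, FreeAlgebra.equivMonoidAlgebraFreeMonoid]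

section SetPartitions

variable {n k j : ℕ} {A B C A' B' C' D E : Finset (Finset ℕ)}

lemma mem_ground {x : ℕ} : x ∈ ground n ↔ 1 ≤ x ∧ x ≤ n := mem_Icc

lemma IsSetPartition.subset_ground (hA : IsSetPartition n A) {b : Finset ℕ} (hb : b ∈ A) :
    b ⊆ ground n :=
  hA.2.2 ▸ le_sup (f := id) hb

lemma IsSetPartition.exists_mem (hA : IsSetPartition n A) {x : ℕ} (hx : x ∈ ground n) :
    ∃ b ∈ A, x ∈ b :=
  mem_sup.mp (hA.2.2 ▸ hx)

lemma isSetPartition_zero_iff : IsSetPartition 0 A ↔ A = ∅ := by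
  refine ⟨fun hA => eq_empty_of_forall_notMem fun b hb => ?_, fun hA => ?_⟩
  · obtain ⟨x, hx⟩ := hA.1 b hb
    have := mem_ground.mp (hA.subset_ground hb hx)
    omega
  · subst hA
    exact ⟨by simp, by simp, by simp [ground]⟩

lemma mem_SPs {P : Finset (Finset ℕ) → Prop} : A ∈ SPs n P ↔ IsSetPartition n A ∧ P A := by
  rw [SPs, mem_filter, mem_powerset]
  exact ⟨And.right, fun h => ⟨fun b hb => mem_powerset.mpr (h.1.subset_ground hb), h⟩⟩

lemma mem_concatP {e : Finset ℕ} :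
    e ∈ concatP k B C ↔ e ∈ B ∨ ∃ c ∈ C, c.image (· + k) = e := by
  simp [concatP, shiftP]

lemma IsSetPartition.concat (hB : IsSetPartition k B) (hC : IsSetPartition j C) :
    IsSetPartition (k + j) (concatP k B C) := by
  have hlow : ∀ b ∈ B, ∀ x ∈ b, 1 ≤ x ∧ x ≤ k := fun b hb x hx =>
    mem_ground.mp (hB.subset_ground hb hx)
  have hhigh : ∀ c ∈ C, ∀ x ∈ c.image (· + k), k < x ∧ x ≤ k + j := by
    intro c hc x hx
    obtain ⟨y, hy, rfl⟩ := mem_image.mp hx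
    have := mem_ground.mp (hC.subset_ground hc hy)
    omega
  refine ⟨fun e he => ?_, fun e he e' he' hne => ?_, ?_⟩
  · obtain h | ⟨c, hc, rfl⟩ := mem_concatP.mp he
    exacts [hB.1 e h, (hC.1 c hc).image _]
  · obtain h | ⟨c, hc, rfl⟩ := mem_concatP.mp he <;>
      obtain h' | ⟨c', hc', rfl⟩ := mem_concatP.mp he'
    · exact hB.2.1 e h e' h' hne
    · exact disjoint_left.mpr fun x hx hx' => by
        have := hlow e h x hx; have := hhigh c' hc' x hx'; omega
    · exact disjoint_left.mpr fun x hx hx' => by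
        have := hhigh c hc x hx; have := hlow e' h' x hx'; omega
    · exact (disjoint_image (add_left_injective k)).mpr
        (hC.2.1 c hc c' hc' fun h => hne (h ▸ rfl))
  · ext x
    rw [mem_sup, mem_ground]
    constructor
    · rintro ⟨e, he, hx⟩
      obtain h | ⟨c, hc, rfl⟩ := mem_concatP.mp he
      · have := hlow e h x hx; omega
      · have := hhigh c hc x hx; omega
    · intro hx
      by_cases hxk : x ≤ k
      · obtain ⟨b, hb, hxb⟩ := hB.exists_mem (mem_ground.mpr ⟨hx.1, hxk⟩)
        exact ⟨b, mem_concatP.mpr (.inl hb), hxb⟩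
      · obtain ⟨c, hc, hxc⟩ := hC.exists_mem (x := x - k) (mem_ground.mpr (by omega))
        exact ⟨c.image (· + k), mem_concatP.mpr (.inr ⟨c, hc, rfl⟩),
          mem_image.mpr ⟨x - k, hxc, by omega⟩⟩

lemma concatP_zero_left : concatP 0 ∅ C = C := by
  simp [concatP, shiftP]

lemma concatP_empty_right : concatP k B ∅ = B := by
  simp [concatP, shiftP]

lemma concatP_assoc :
    concatP (n + k) (concatP n A B) C = concatP n A (concatP k B C) := by
  simp only [concatP, shiftP, image_union, image_image, union_assoc]
  congr 2
  ext c : 1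
  simp [Function.comp_def, image_image, add_assoc, add_comm k n]

lemma concatP_inj {j' : ℕ} (hB : IsSetPartition k B) (hC : IsSetPartition j C)
    (hB' : IsSetPartition k B') (hC' : IsSetPartition j' C') :
    concatP k B C = concatP k B' C' ↔ B = B' ∧ C = C' := by
  refine ⟨fun h => ?_, fun h => h.1 ▸ h.2 ▸ rfl⟩
  have hsplit : ∀ {j B C}, IsSetPartition k B → IsSetPartition j C →
      (concatP k B C).filter (· ⊆ ground k) = B ∧
        (concatP k B C).filter (¬ · ⊆ ground k) = shiftP k C := by
    intro j B C hB hC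
    have hC_high : ∀ c ∈ C, ¬ c.image (· + k) ⊆ ground k := fun c hc hsub => by
      obtain ⟨y, hy⟩ := hC.1 c hc
      have := mem_ground.mp (hsub (mem_image_of_mem _ hy))
      have := mem_ground.mp (hC.subset_ground hc hy)
      omega
    constructor <;> ext e <;> simp only [mem_filter, mem_concatP, shiftP, mem_image] <;>
      constructor
    · rintro ⟨h | ⟨c, hc, rfl⟩, he⟩
      exacts [h, absurd he (hC_high c hc)]
    · exact fun h => ⟨.inl h, hB.subset_ground h⟩
    · rintro ⟨h | hc, he⟩
      exacts [absurd (hB.subset_ground h) he, hc]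
    · rintro ⟨c, hc, rfl⟩
      exact ⟨.inr ⟨c, hc, rfl⟩, hC_high c hc⟩
  refine ⟨(hsplit hB hC).1.symm.trans (h ▸ (hsplit hB' hC').1), ?_⟩
  have hshift : shiftP k C = shiftP k C' := (hsplit hB hC).2.symm.trans (h ▸ (hsplit hB' hC').2)
  exact image_injective (image_injective (add_left_injective k)) hshift

/-- For a set partition of `[k + j]`, this says that it is a concatenation at `k`. -/
def SeparatedAt (k : ℕ) (E : Finset (Finset ℕ)) : Prop :=
  ∀ e ∈ E, e ⊆ ground k ∨ ∀ x ∈ e, k < x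

lemma separatedAt_concatP (hB : IsSetPartition k B) (hC : IsSetPartition j C) :
    SeparatedAt k (concatP k B C) := by
  intro e he
  obtain h | ⟨c, hc, rfl⟩ := mem_concatP.mp he
  · exact .inl (hB.subset_ground h)
  · refine .inr fun x hx => ?_
    obtain ⟨y, hy, rfl⟩ := mem_image.mp hx
    have := mem_ground.mp (hC.subset_ground hc hy)
    omega

lemma SeparatedAt.lt_of_mem_upper (hs : SeparatedAt k E) {e : Finset ℕ}
    (he : e ∈ E.filter (¬ · ⊆ ground k)) {x : ℕ} (hx : x ∈ e) : k < x :=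
  (hs e (mem_filter.mp he).1).resolve_left (mem_filter.mp he).2 x hx

lemma SeparatedAt.isSetPartition_lower (hs : SeparatedAt k E) (hE : IsSetPartition (k + j) E) :
    IsSetPartition k (E.filter (· ⊆ ground k)) := by
  refine ⟨fun b hb => hE.1 b (mem_filter.mp hb).1,
    fun b hb b' hb' => hE.2.1 b (mem_filter.mp hb).1 b' (mem_filter.mp hb').1, ?_⟩
  ext x
  simp only [mem_sup, id_eq, mem_filter]
  refine ⟨fun ⟨b, ⟨_, hb⟩, hx⟩ => hb hx, fun hx => ?_⟩
  have hx' := mem_ground.mp hx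
  obtain ⟨b, hb, hxb⟩ := hE.exists_mem (x := x) (mem_ground.mpr (by omega))
  refine ⟨b, ⟨hb, (hs b hb).resolve_right fun h => ?_⟩, hxb⟩
  have := h x hxb
  omega

lemma SeparatedAt.isSetPartition_upper (hs : SeparatedAt k E) (hE : IsSetPartition (k + j) E) :
    IsSetPartition j ((E.filter (¬ · ⊆ ground k)).image (image (· - k))) := by
  refine ⟨fun b hb => ?_, fun b hb b' hb' hne => ?_, ?_⟩
  · obtain ⟨e, he, rfl⟩ := mem_image.mp hb
    exact (hE.1 e (mem_filter.mp he).1).image _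
  · obtain ⟨e, he, rfl⟩ := mem_image.mp hb
    obtain ⟨e', he', rfl⟩ := mem_image.mp hb'
    have hd := hE.2.1 e (mem_filter.mp he).1 e' (mem_filter.mp he').1 fun h => hne (h ▸ rfl)
    refine disjoint_left.mpr fun x hx hx' => ?_
    obtain ⟨y, hy, rfl⟩ := mem_image.mp hx
    obtain ⟨y', hy', hyy⟩ := mem_image.mp hx'
    have := hs.lt_of_mem_upper he hy
    have := hs.lt_of_mem_upper he' hy'
    exact disjoint_left.mp hd hy (show y = y' by omega ▸ hy')
  · ext x
    simp only [mem_sup, id_eq, mem_image]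
    constructor
    · rintro ⟨_, ⟨e, he, rfl⟩, hx⟩
      obtain ⟨y, hy, rfl⟩ := mem_image.mp hx
      have := hs.lt_of_mem_upper he hy
      have := mem_ground.mp (hE.subset_ground (mem_filter.mp he).1 hy)
      exact mem_ground.mpr (by omega)
    · intro hx
      have hx' := mem_ground.mp hx
      obtain ⟨e, he, hxe⟩ := hE.exists_mem (x := x + k) (mem_ground.mpr (by omega))
      have heHi : e ∈ E.filter (¬ · ⊆ ground k) :=
        mem_filter.mpr ⟨he, fun h => by have := mem_ground.mp (h hxe); omega⟩
      exact ⟨_, ⟨e, heHi, rfl⟩, mem_image.mpr ⟨x + k, hxe, by omega⟩⟩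

lemma SeparatedAt.shiftP_upper (hs : SeparatedAt k E) :
    shiftP k ((E.filter (¬ · ⊆ ground k)).image (image (· - k))) = E.filter (¬ · ⊆ ground k) := by
  rw [shiftP, image_image]
  refine (image_congr fun e he => ?_).trans image_id
  rw [Function.comp_apply, image_image]
  refine (image_congr fun x hx => ?_).trans image_id
  have := hs.lt_of_mem_upper he hx
  simp only [Function.comp_apply, id_eq]
  omega

lemma SeparatedAt.exists_eq_concatP (hs : SeparatedAt k E) (hE : IsSetPartition (k + j) E) :
    ∃ B C, IsSetPartition k B ∧ IsSetPartition j C ∧ E = concatP k B C :=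
  ⟨_, _, hs.isSetPartition_lower hE, hs.isSetPartition_upper hE,
    by rw [concatP, hs.shiftP_upper, filter_union_filter_not_eq]⟩

lemma refines_refl (A : Finset (Finset ℕ)) : refines A A :=
  fun a ha => ⟨a, ha, Subset.refl a⟩

lemma refines_trans (h₁ : refines A B) (h₂ : refines B C) : refines A C := fun a ha => by
  obtain ⟨b, hb, hab⟩ := h₁ a ha
  obtain ⟨c, hc, hbc⟩ := h₂ b hb
  exact ⟨c, hc, hab.trans hbc⟩

lemma IsSetPartition.subset_of_refines (hA : IsSetPartition n A) (h₁ : refines A B)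
    (h₂ : refines B A) : A ⊆ B := fun a ha => by
  obtain ⟨b, hb, hab⟩ := h₁ a ha
  obtain ⟨a', ha', hba⟩ := h₂ b hb
  -- `a ⊆ a'` forces `a = a'` since distinct parts are disjoint and nonempty
  obtain rfl : a = a' := by
    by_contra hne
    obtain ⟨x, hx⟩ := hA.1 a ha
    exact disjoint_left.mp (hA.2.1 a ha a' ha' hne) hx (hba (hab hx))
  exact (Subset.antisymm hab hba) ▸ hb

lemma refines_antisymm (hA : IsSetPartition n A) (hB : IsSetPartition k B) (h₁ : refines A B)
    (h₂ : refines B A) : A = B :=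
  Subset.antisymm (hA.subset_of_refines h₁ h₂) (hB.subset_of_refines h₂ h₁)

lemma mem_meetP {e : Finset ℕ} :
    e ∈ meetP C E ↔ (∃ c ∈ C, ∃ d ∈ E, c ∩ d = e) ∧ e.Nonempty := by
  simp only [meetP, mem_filter, mem_image, mem_product, Prod.exists]
  aesop

lemma IsSetPartition.meet (hC : IsSetPartition n C) (hE : IsSetPartition n E) :
    IsSetPartition n (meetP C E) := by
  refine ⟨fun e he => (mem_meetP.mp he).2, fun e he e' he' hne => ?_, ?_⟩
  · obtain ⟨⟨c, hc, d, hd, rfl⟩, -⟩ := mem_meetP.mp he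
    obtain ⟨⟨c', hc', d', hd', rfl⟩, -⟩ := mem_meetP.mp he'
    by_cases hcc : c = c'
    · subst hcc
      exact (hE.2.1 d hd d' hd' fun h => hne (h ▸ rfl)).mono inter_subset_right inter_subset_right
    · exact (hC.2.1 c hc c' hc' hcc).mono inter_subset_left inter_subset_left
  · ext x
    rw [mem_sup]
    refine ⟨fun ⟨e, he, hx⟩ => ?_, fun hx => ?_⟩
    · obtain ⟨⟨c, hc, d, -, rfl⟩, -⟩ := mem_meetP.mp he
      exact hC.subset_ground hc (mem_inter.mp hx).1
    · obtain ⟨c, hc, hxc⟩ := hC.exists_mem hx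
      obtain ⟨d, hd, hxd⟩ := hE.exists_mem hx
      exact ⟨c ∩ d, mem_meetP.mpr ⟨⟨c, hc, d, hd, rfl⟩, x, mem_inter.mpr ⟨hxc, hxd⟩⟩,
        mem_inter.mpr ⟨hxc, hxd⟩⟩

lemma meetP_refines_left : refines (meetP C E) C := fun e he => by
  obtain ⟨⟨c, hc, d, -, rfl⟩, -⟩ := mem_meetP.mp he
  exact ⟨c, hc, inter_subset_left⟩

lemma meetP_refines_right : refines (meetP C E) E := fun e he => by
  obtain ⟨⟨c, -, d, hd, rfl⟩, -⟩ := mem_meetP.mp he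
  exact ⟨d, hd, inter_subset_right⟩

lemma refines_meetP (hA : ∀ a ∈ A, a.Nonempty) (h₁ : refines A C) (h₂ : refines A E) :
    refines A (meetP C E) := fun a ha => by
  obtain ⟨c, hc, hac⟩ := h₁ a ha
  obtain ⟨d, hd, had⟩ := h₂ a ha
  obtain ⟨x, hx⟩ := hA a ha
  exact ⟨c ∩ d, mem_meetP.mpr ⟨⟨c, hc, d, hd, rfl⟩, x, mem_inter.mpr ⟨hac hx, had hx⟩⟩,
    subset_inter hac had⟩

lemma isSetPartition_onePartP (n : ℕ) : IsSetPartition n (onePartP n) := by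
  unfold onePartP
  split_ifs with hn
  · exact hn ▸ isSetPartition_zero_iff.mpr rfl
  · exact ⟨by simpa [ground] using Nat.one_le_iff_ne_zero.mpr hn, by simp, by simp⟩

lemma SeparatedAt.of_refines (hD : SeparatedAt n D) (h : refines E D) : SeparatedAt n E :=
  fun e he => by
  obtain ⟨d, hd, hed⟩ := h e he
  exact (hD d hd).imp hed.trans fun hd x hx => hd x (hed hx)

lemma refines_concatP_onePartP_iff (hE : IsSetPartition (n + k) E) :
    refines E (concatP n (onePartP n) (onePartP k)) ↔ SeparatedAt n E := by
  refine ⟨(separatedAt_concatP (isSetPartition_onePartP n) (isSetPartition_onePartP k)).of_refines,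
    fun h e he => ?_⟩
  obtain ⟨x, hx⟩ := hE.1 e he
  have hxg := mem_ground.mp (hE.subset_ground he hx)
  rcases h e he with hlow | hhigh
  · have hn : n ≠ 0 := by have := mem_ground.mp (hlow hx); omega
    exact ⟨ground n, mem_concatP.mpr (.inl (by simp [onePartP, hn])), hlow⟩
  · have hk : k ≠ 0 := by have := hhigh x hx; omega
    refine ⟨(ground k).image (· + n),
      mem_concatP.mpr (.inr ⟨ground k, by simp [onePartP, hk], rfl⟩),
      fun y hy => mem_image.mpr ⟨y - n, mem_ground.mpr ?_, ?_⟩⟩ <;>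
    · have := hhigh y hy
      have := mem_ground.mp (hE.subset_ground he hy)
      omega

lemma concatP_refines_concatP_iff (hA : IsSetPartition n A) (hB : IsSetPartition j B)
    (hA' : IsSetPartition n A') (hB' : IsSetPartition k B') :
    refines (concatP n A B) (concatP n A' B') ↔ refines A A' ∧ refines B B' := by
  refine ⟨fun h => ⟨fun a ha => ?_, fun b hb => ?_⟩, fun ⟨hAA, hBB⟩ e he => ?_⟩
  · obtain ⟨e, he, hae⟩ := h a (mem_concatP.mpr (.inl ha))
    refine (mem_concatP.mp he).elim (fun he => ⟨e, he, hae⟩) fun ⟨b', hb', hbe⟩ => ?_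
    obtain ⟨x, hx⟩ := hA.1 a ha
    obtain ⟨y, hy, rfl⟩ := mem_image.mp (hbe ▸ hae hx)
    have := mem_ground.mp (hA.subset_ground ha hx)
    have := mem_ground.mp (hB'.subset_ground hb' hy)
    omega
  · obtain ⟨e, he, hbe⟩ := h _ (mem_concatP.mpr (.inr ⟨b, hb, rfl⟩))
    obtain ⟨x, hx⟩ := hB.1 b hb
    have := mem_ground.mp (hB.subset_ground hb hx)
    rcases mem_concatP.mp he with he | ⟨b', hb', rfl⟩
    · have := mem_ground.mp (hA'.subset_ground he (hbe (mem_image_of_mem _ hx)))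
      omega
    · exact ⟨b', hb', (image_subset_image_iff (add_left_injective n)).mp hbe⟩
  · rcases mem_concatP.mp he with he | ⟨b, hb, rfl⟩
    · obtain ⟨a', ha', hea⟩ := hAA e he
      exact ⟨a', mem_concatP.mpr (.inl ha'), hea⟩
    · obtain ⟨b', hb', hbb⟩ := hBB b hb
      exact ⟨_, mem_concatP.mpr (.inr ⟨b', hb', rfl⟩), image_subset_image hbb⟩

end SetPartitions

section PowerSums

variable {R : Type*} [Ring R] {n k : ℕ} {A B : Finset (Finset ℕ)}

def MonomialProductRule (m : ℕ → Finset (Finset ℕ) → R) : Prop :=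
  ∀ n k A B, IsSetPartition n A → IsSetPartition k B →
    m n A * m k B =
      ∑ C ∈ SPs (n + k) (fun C => meetP C (concatP n (onePartP n) (onePartP k)) = concatP n A B),
        m (n + k) C

def powerSum (m : ℕ → Finset (Finset ℕ) → R) (n : ℕ) (A : Finset (Finset ℕ)) : R :=
  ∑ B ∈ SPs n (fun B => refines A B), m n B

lemma powerSum_zero_empty (m : ℕ → Finset (Finset ℕ) → R) : powerSum m 0 ∅ = m 0 ∅ := by
  have h : SPs 0 (fun B => refines ∅ B) = {∅} := by
    ext B
    simp [mem_SPs, isSetPartition_zero_iff, refines]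
  rw [powerSum, h, sum_singleton]

lemma sum_concatP_eq_sum_separatedAt {M : Type*} [AddCommMonoid M] (f : Finset (Finset ℕ) → M)
    (hA : IsSetPartition n A) (hB : IsSetPartition k B) :
    ∑ x ∈ SPs n (fun A' => refines A A') ×ˢ SPs k (fun B' => refines B B'), f (concatP n x.1 x.2) =
      ∑ E ∈ SPs (n + k) (fun E => refines (concatP n A B) E ∧ SeparatedAt n E), f E := by
  refine sum_bij (fun x _ => concatP n x.1 x.2) ?_ ?_ ?_ fun _ _ => rfl
  · rintro ⟨A', B'⟩ hx
    simp only [mem_product, mem_SPs] at hx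
    exact mem_SPs.mpr ⟨hx.1.1.concat hx.2.1,
      (concatP_refines_concatP_iff hA hB hx.1.1 hx.2.1).mpr ⟨hx.1.2, hx.2.2⟩,
      separatedAt_concatP hx.1.1 hx.2.1⟩
  · rintro ⟨A₁, B₁⟩ h₁ ⟨A₂, B₂⟩ h₂ heq
    simp only [mem_product, mem_SPs] at h₁ h₂
    obtain ⟨rfl, rfl⟩ := (concatP_inj h₁.1.1 h₁.2.1 h₂.1.1 h₂.2.1).mp heq
    rfl
  · intro E hE
    obtain ⟨hE, hAB, hs⟩ := mem_SPs.mp hE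
    obtain ⟨A', B', hA', hB', rfl⟩ := hs.exists_eq_concatP hE
    obtain ⟨h₁, h₂⟩ := (concatP_refines_concatP_iff hA hB hA' hB').mp hAB
    exact ⟨(A', B'), mem_product.mpr ⟨mem_SPs.mpr ⟨hA', h₁⟩, mem_SPs.mpr ⟨hB', h₂⟩⟩, rfl⟩

lemma powerSum_mul {m : ℕ → Finset (Finset ℕ) → R} (hmul : MonomialProductRule m)
    (hA : IsSetPartition n A) (hB : IsSetPartition k B) :
    powerSum m n A * powerSum m k B = powerSum m (n + k) (concatP n A B) := by
  set D := concatP n (onePartP n) (onePartP k)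
  set S := SPs (n + k) (fun E => refines (concatP n A B) E ∧ SeparatedAt n E)
  set T := SPs (n + k) (fun C => refines (concatP n A B) C)
  have hAB := hA.concat hB
  have hD : IsSetPartition (n + k) D :=
    (isSetPartition_onePartP n).concat (isSetPartition_onePartP k)
  have hmaps : ∀ C ∈ T, meetP C D ∈ S := fun C hC => by
    obtain ⟨hC, hABC⟩ := mem_SPs.mp hC
    have hABD := (refines_concatP_onePartP_iff hAB).mpr (separatedAt_concatP hA hB)
    exact mem_SPs.mpr ⟨hC.meet hD, refines_meetP hAB.1 hABC hABD,
      (refines_concatP_onePartP_iff (hC.meet hD)).mp meetP_refines_right⟩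
  have hfiber : ∀ E ∈ S, SPs (n + k) (fun C => meetP C D = E) = {C ∈ T | meetP C D = E} :=
    fun E hE => by
    ext C
    rw [mem_filter, mem_SPs]
    refine ⟨fun ⟨hC, hCE⟩ => ⟨mem_SPs.mpr ⟨hC, ?_⟩, hCE⟩, fun ⟨hC, hCE⟩ => ⟨(mem_SPs.mp hC).1, hCE⟩⟩
    exact refines_trans (mem_SPs.mp hE).2.1 (hCE ▸ meetP_refines_left)
  calc powerSum m n A * powerSum m k B
      = ∑ x ∈ SPs n (fun A' => refines A A') ×ˢ SPs k (fun B' => refines B B'),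
          m n x.1 * m k x.2 := by rw [powerSum, powerSum, sum_mul_sum, sum_product]
    _ = ∑ x ∈ SPs n (fun A' => refines A A') ×ˢ SPs k (fun B' => refines B B'),
          ∑ C ∈ SPs (n + k) (fun C => meetP C D = concatP n x.1 x.2), m (n + k) C :=
        sum_congr rfl fun x hx => by
          simp only [mem_product, mem_SPs] at hx
          exact hmul n k x.1 x.2 hx.1.1 hx.2.1
    _ = ∑ E ∈ S, ∑ C ∈ SPs (n + k) (fun C => meetP C D = E), m (n + k) C :=
        sum_concatP_eq_sum_separatedAt
          (fun E => ∑ C ∈ SPs (n + k) (fun C => meetP C D = E), m (n + k) C) hA hB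
    _ = ∑ E ∈ S, ∑ C ∈ T with meetP C D = E, m (n + k) C :=
        sum_congr rfl fun E hE => by rw [hfiber E hE]
    _ = powerSum m (n + k) (concatP n A B) := sum_fiberwise_of_maps_to hmaps _

end PowerSums

section Factorization

lemma AtomicP.not_separatedAt {n k : ℕ} {A : Finset (Finset ℕ)} (hA : AtomicP n A) (hk0 : 0 < k)
    (hkn : k < n) : ¬ SeparatedAt k A := fun hs => by
  obtain ⟨B, C, hB, hC, hBC⟩ :=
    hs.exists_eq_concatP (j := n - k) (by rw [Nat.add_sub_cancel' hkn.le]; exact hA.1)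
  exact hA.2.2 ⟨k, B, C, hk0, hkn, hB, hC, hBC⟩

instance : Monoid SPIdx where
  mul x y := ⟨(x.1.1 + y.1.1, concatP x.1.1 x.1.2 y.1.2), x.2.concat y.2⟩
  one := ⟨(0, ∅), isSetPartition_zero_iff.mpr rfl⟩
  mul_assoc _ _ _ := Subtype.ext <| Prod.ext (add_assoc _ _ _) concatP_assoc
  one_mul _ := Subtype.ext <| Prod.ext (zero_add _) concatP_zero_left
  mul_one _ := Subtype.ext <| Prod.ext rfl concatP_empty_right

lemma SPIdx.mul_val (x y : SPIdx) : (x * y).1 = (x.1.1 + y.1.1, concatP x.1.1 x.1.2 y.1.2) := rfl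

def AtomIdx.toSPIdx (a : AtomIdx) : SPIdx := ⟨a.1, a.2.1⟩

lemma AtomIdx.size_le_of_mul_eq {a b : AtomIdx} {x y : SPIdx}
    (h : a.toSPIdx * x = b.toSPIdx * y) : a.1.1 ≤ b.1.1 := by
  by_contra! hlt
  have h' : concatP a.1.1 a.1.2 x.1.2 = concatP b.1.1 b.1.2 y.1.2 := congrArg (·.1.2) h
  -- otherwise `a` would split at the size of `b`
  refine a.2.not_separatedAt b.2.2.1 hlt fun e he => ?_
  exact separatedAt_concatP b.2.1 y.2 e (h' ▸ mem_union_left _ he)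

lemma AtomIdx.eq_and_eq_of_mul_eq {a b : AtomIdx} {x y : SPIdx}
    (h : a.toSPIdx * x = b.toSPIdx * y) : a = b ∧ x = y := by
  have hab : a.1.1 = b.1.1 := (size_le_of_mul_eq h).antisymm (size_le_of_mul_eq h.symm)
  have hxy : x.1.1 = y.1.1 := by
    have : a.1.1 + x.1.1 = b.1.1 + y.1.1 := congrArg (·.1.1) h
    omega
  have h' : concatP a.1.1 a.1.2 x.1.2 = concatP b.1.1 b.1.2 y.1.2 := congrArg (·.1.2) h
  rw [hab] at h'
  obtain ⟨hA, hX⟩ := (concatP_inj (hab ▸ a.2.1) x.2 b.2.1 y.2).mp h'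
  exact ⟨Subtype.ext (Prod.ext hab hA), Subtype.ext (Prod.ext hxy hX)⟩

def factorHom : FreeMonoid AtomIdx →* SPIdx := FreeMonoid.lift AtomIdx.toSPIdx

lemma factorHom_of (a : AtomIdx) : factorHom (.of a) = a.toSPIdx := rfl

lemma factorHom_of_mul_ne_one (a : AtomIdx) (w : FreeMonoid AtomIdx) :
    factorHom (.of a * w) ≠ 1 := fun h => by
  rw [map_mul] at h
  have : a.1.1 + (factorHom w).1.1 = 0 := congrArg (·.1.1) h
  have := a.2.2.1
  omega

lemma factorHom_injective : Function.Injective factorHom := by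
  intro w₁ w₂ h
  induction w₁ using FreeMonoid.inductionOn' generalizing w₂ with
  | one =>
    cases w₂ using FreeMonoid.casesOn with
    | one => rfl
    | of_mul b w₂ => exact absurd h.symm (factorHom_of_mul_ne_one b w₂)
  | of_mul a w₁ ih =>
    cases w₂ using FreeMonoid.casesOn with
    | one => exact absurd h (factorHom_of_mul_ne_one a w₁)
    | of_mul b w₂ =>
      rw [map_mul, map_mul, factorHom_of, factorHom_of] at h
      obtain ⟨rfl, hw⟩ := AtomIdx.eq_and_eq_of_mul_eq h
      rw [ih hw]

lemma factorHom_surjective : Function.Surjective factorHom := by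
  rintro ⟨⟨n, A⟩, hA⟩
  rw [← MonoidHom.mem_mrange]
  induction n using Nat.strong_induction_on generalizing A with
  | _ n ih =>
  rcases Nat.eq_zero_or_pos n with rfl | hn
  · obtain rfl := isSetPartition_zero_iff.mp hA
    exact one_mem _
  by_cases hat : AtomicP n A
  · exact ⟨.of ⟨(n, A), hat⟩, rfl⟩
  · obtain ⟨k, B, C, hk0, hkn, hB, hC, rfl⟩ := not_not.mp fun h => hat ⟨hA, hn, h⟩
    have hsplit : (⟨(n, concatP k B C), hA⟩ : SPIdx) = ⟨(k, B), hB⟩ * ⟨(n - k, C), hC⟩ :=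
      Subtype.ext (Prod.ext (by simp only [SPIdx.mul_val]; omega) rfl)
    rw [hsplit]
    exact mul_mem (ih k hkn B hB) (ih (n - k) (by omega) C hC)

/-- Unique atomic factorization of set partitions. -/
def factorEquiv : FreeMonoid AtomIdx ≃ SPIdx :=
  .ofBijective factorHom ⟨factorHom_injective, factorHom_surjective⟩

end Factorization

section PowerSumBasis

/-- The refinement up-set `{B ≥ A}` of `A ⊢ [n]`, among the set partitions of `[n]`. -/
def upSet (i : SPIdx) : Finset SPIdx :=
  ((SPs i.1.1 (fun B => refines i.1.2 B)).image (Prod.mk i.1.1)).subtype _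

lemma mem_upSet {i j : SPIdx} : j ∈ upSet i ↔ j.1.1 = i.1.1 ∧ refines i.1.2 j.1.2 := by
  obtain ⟨⟨n, A⟩, -⟩ := i
  obtain ⟨⟨k, B⟩, hB⟩ := j
  simp only [upSet, mem_subtype, mem_image, mem_SPs, Prod.mk.injEq]
  constructor
  · rintro ⟨_, ⟨-, h⟩, rfl, rfl⟩
    exact ⟨rfl, h⟩
  · rintro ⟨rfl, h⟩
    exact ⟨B, ⟨hB, h⟩, rfl, rfl⟩

lemma isUpSetFamily_upSet : IsUpSetFamily upSet where
  mem_self _ := mem_upSet.mpr ⟨rfl, refines_refl _⟩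
  subset_of_mem _ _ hj _ hx := by
    rw [mem_upSet] at hj hx ⊢
    exact ⟨hx.1.trans hj.1, refines_trans hj.2 hx.2⟩
  eq_of_mem_of_mem i j hj hi := by
    rw [mem_upSet] at hj hi
    exact Subtype.ext (Prod.ext hi.1 (refines_antisymm i.2 j.2 hj.2 hi.2))

lemma sum_upSet {R : Type*} [Ring R] (m : ℕ → Finset (Finset ℕ) → R) (i : SPIdx) :
    ∑ j ∈ upSet i, m j.1.1 j.1.2 = powerSum m i.1.1 i.1.2 := by
  have hsub : ∀ x ∈ (SPs i.1.1 (fun B => refines i.1.2 B)).image (Prod.mk i.1.1),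
      IsSetPartition x.1 x.2 := fun x hx => by
    obtain ⟨B, hB, rfl⟩ := mem_image.mp hx
    exact (mem_SPs.mp hB).1
  rw [upSet, sum_subtype_of_mem (fun x : ℕ × Finset (Finset ℕ) => m x.1 x.2) hsub,
    sum_image fun _ _ _ _ h => (Prod.mk.inj h).2]
  rfl

def powerSumHom {R : Type*} [Ring R] {m : ℕ → Finset (Finset ℕ) → R} (hone : m 0 ∅ = 1)
    (hmul : MonomialProductRule m) : SPIdx →* R where
  toFun i := powerSum m i.1.1 i.1.2
  map_one' := (powerSum_zero_empty m).trans hone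
  map_mul' x y := (powerSum_mul hmul x.2 y.2).symm

end PowerSumBasis

/-- `NCSym` (any algebra with basis `m_A` indexed by set partitions satisfying
the monomial product rule) is freely generated, as a (noncommutative) algebra, by the
power sums `p_A = ∑_{B ≥ A} m_B` with `A` atomic. -/
theorem ncsym_free {R : Type*} [Ring R] [Algebra ℚ R]
    (m : ℕ → Finset (Finset ℕ) → R)
    (hone : m 0 ∅ = 1)
    (hmul : ∀ n k A B, IsSetPartition n A → IsSetPartition k B →
      m n A * m k B =
        ∑ C ∈ SPs (n + k)
            (fun C => meetP C (concatP n (onePartP n) (onePartP k)) = concatP n A B),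
          m (n + k) C)
    (hli : LinearIndependent ℚ (fun i : SPIdx => m i.1.1 i.1.2))
    (hspan : Submodule.span ℚ (Set.range fun i : SPIdx => m i.1.1 i.1.2) = ⊤) :
    Function.Bijective
      ⇑(FreeAlgebra.lift ℚ
        (fun a : AtomIdx => ∑ B ∈ SPs a.1.1 (fun B => refines a.1.2 B), m a.1.1 B) :
          FreeAlgebra ℚ AtomIdx →ₐ[ℚ] R) := by
  set F := FreeAlgebra.lift ℚ fun a : AtomIdx => powerSumHom hone hmul a.toSPIdx
  have hF : F.toMonoidHom.comp (FreeMonoid.lift (FreeAlgebra.ι ℚ)) =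
      (powerSumHom hone hmul).comp factorHom :=
    FreeMonoid.hom_eq fun a => FreeAlgebra.lift_ι_apply _ _
  refine Module.Basis.bijective_of_apply_eq (f := F.toLinearMap)
    (FreeAlgebra.basisFreeMonoid ℚ AtomIdx)
    ((Module.Basis.mk hli hspan.ge).sumUp isUpSetFamily_upSet)
    factorEquiv fun w => ?_
  rw [Module.Basis.sumUp_apply]
  simp only [Module.Basis.mk_apply, sum_upSet]
  rw [FreeAlgebra.basisFreeMonoid_apply]
  exact DFunLike.congr_fun hF w

end
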